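/- arXiv:1906.06522 — 2 statements merged into one kernel-verified Lean document; each statement's English description precedes it below -/
import Mathlib

section
/- In the Poisson prior case, the first-order posterior intensity of the hidden process Φ given measurements Ξ = (z_1,…,z_m) equals μ¹_{Φ|Ξ}(x) = q_d + Σ_{k=1}^m p_d l_d(z_k|x) / ( l_c(z_k) + ∫_Λ p_d l_d(z_k|u) ν(du) ), where q_d = 1 − p_d. -/
open MeasureTheory Finset

variable {Λ : Type*} [MeasurableSpace Λ]

/-- The Janossy density `j^(m)_Ξ` of the measurement process restricted to the
configuration points indexed by `T ⊆ {1,…,m}`, for a hidden process with Janossy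
densities `jf`, clutter intensity `lc`, detection probability `pd` and
displacement likelihood `ld`. -/
noncomputable def jXi (ν : Measure Λ) [SigmaFinite ν] (lc : Λ → ℝ) (pd : ℝ)
    (ld : Λ → Λ → ℝ) (jf : (n : ℕ) → (Fin n → Λ) → ℝ)
    {m : ℕ} (z : Fin m → Λ) (T : Finset (Fin m)) : ℝ :=
  ∑' p : ℕ, ∑ S ∈ T.powerset,
    if hS : S.card ≤ p then
      (∏ j ∈ T \ S, lc (z j)) *
        ((1 - pd) ^ (p - S.card) / (Nat.factorial (p - S.card) : ℝ)) *
        ∫ u : Fin p → Λ, jf p u *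
          ∏ k : Fin S.card, pd * ld (z (S.orderEmbOfFin rfl k)) (u (Fin.castLE hS k))
          ∂Measure.pi (fun _ : Fin p => ν)
    else 0

/-- The first-order corrector term `Υ¹_{z_T}(x)`. -/
noncomputable def ups1 (ν : Measure Λ) [SigmaFinite ν] (lc : Λ → ℝ) (pd : ℝ)
    (ld : Λ → Λ → ℝ) (jf : (n : ℕ) → (Fin n → Λ) → ℝ)
    {m : ℕ} (z : Fin m → Λ) (T : Finset (Fin m)) (x : Λ) : ℝ :=
  ∑' p : ℕ, ∑ S ∈ T.powerset,
    if hS : S.card ≤ p then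
      (∏ j ∈ T \ S, lc (z j)) *
        ((1 - pd) ^ (p - S.card) / (Nat.factorial (p - S.card) : ℝ)) *
        ∫ u : Fin p → Λ, jf (p + 1) (Fin.snoc u x) *
          ∏ k : Fin S.card, pd * ld (z (S.orderEmbOfFin rfl k)) (u (Fin.castLE hS k))
          ∂Measure.pi (fun _ : Fin p => ν)
    else 0

/-- The second-order corrector term `Υ²_{z_T}(x,y)`. -/
noncomputable def ups2 (ν : Measure Λ) [SigmaFinite ν] (lc : Λ → ℝ) (pd : ℝ)
    (ld : Λ → Λ → ℝ) (jf : (n : ℕ) → (Fin n → Λ) → ℝ)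
    {m : ℕ} (z : Fin m → Λ) (T : Finset (Fin m)) (x y : Λ) : ℝ :=
  ∑' p : ℕ, ∑ S ∈ T.powerset,
    if hS : S.card ≤ p then
      (∏ j ∈ T \ S, lc (z j)) *
        ((1 - pd) ^ (p - S.card) / (Nat.factorial (p - S.card) : ℝ)) *
        ∫ u : Fin p → Λ, jf (p + 2) (Fin.snoc (Fin.snoc u x) y) *
          ∏ k : Fin S.card, pd * ld (z (S.orderEmbOfFin rfl k)) (u (Fin.castLE hS k))
          ∂Measure.pi (fun _ : Fin p => ν)
    else 0

/-!
For a Poisson prior all Janossy densities equal `e^{-ν(Λ)}`. In the `p`-th term of `j_Ξ(z_T)`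
the integral then factorizes: each of the `p - |S|` undetected points contributes `ν(Λ)` and the
point detected as `z_j` contributes `∫ p_d l_d(z_j|u) ν(du)`. Summing over `p` produces the
exponential series of `q_d ν(Λ)`, and summing over `S ⊆ T` expands a product, so
`j_Ξ(z_T) = e^{-ν(Λ)} e^{q_d ν(Λ)} ∏_{j ∈ T} (l_c(z_j) + ∫ p_d l_d(z_j|u) ν(du))`.
The Palm-shifted Janossy densities `u ↦ j(u, x)` defining `Υ¹(x)` are the same constant, so
`Υ¹_{z_T}(x) = j_Ξ(z_T)` and the posterior intensity is a quotient of such products.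
-/

lemma prod_orderEmbOfFin {α M : Type*} [LinearOrder α] [CommMonoid M] (S : Finset α)
    (f : α → M) : ∏ k : Fin S.card, f (S.orderEmbOfFin rfl k) = ∏ j ∈ S, f j := by
  rw [← prod_coe_sort S f]
  exact Fintype.prod_equiv (S.orderIsoOfFin rfl).toEquiv _ _ fun _ => rfl

lemma integral_prod_castLE (ν : Measure Λ) [SigmaFinite ν] {n p : ℕ} (h : n ≤ p)
    (f : Fin n → Λ → ℝ) :
    ∫ u : Fin p → Λ, ∏ k, f k (u (Fin.castLE h k)) ∂Measure.pi (fun _ => ν)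
      = (∏ k, ∫ v, f k v ∂ν) * ν.real Set.univ ^ (p - n) := by
  obtain ⟨d, rfl⟩ := Nat.exists_eq_add_of_le h
  have hpad : ∀ u : Fin (n + d) → Λ, ∏ k, f k (u (Fin.castLE h k)) =
      ∏ i, Fin.append f (fun _ _ => 1) i (u i) := fun u => by
    simp only [Fin.prod_univ_add, Fin.append_left, Fin.append_right, prod_const_one, mul_one]
    rfl
  simp_rw [hpad, integral_fintype_prod_eq_prod, Fin.prod_univ_add, Fin.append_left,
    Fin.append_right, integral_const, smul_eq_mul, mul_one, prod_const, card_univ,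
    Fintype.card_fin, Nat.add_sub_cancel_left]

lemma integral_prod_orderEmbOfFin {α : Type*} [LinearOrder α] (ν : Measure Λ)
    [SigmaFinite ν] (S : Finset α) {p : ℕ} (h : S.card ≤ p) (g : α → Λ → ℝ) :
    ∫ u : Fin p → Λ, ∏ k, g (S.orderEmbOfFin rfl k) (u (Fin.castLE h k))
        ∂Measure.pi (fun _ => ν)
      = (∏ j ∈ S, ∫ v, g j v ∂ν) * ν.real Set.univ ^ (p - S.card) := by
  rw [integral_prod_castLE ν h, prod_orderEmbOfFin S fun j => ∫ v, g j v ∂ν]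

lemma Real.hasSum_ite_pow_sub_div_factorial (r : ℝ) (n : ℕ) :
    HasSum (fun p : ℕ => if n ≤ p then r ^ (p - n) / (p - n).factorial else 0)
      (Real.exp r) := by
  rw [← hasSum_nat_add_iff' n, sum_eq_zero fun i hi => if_neg (by simpa using hi), sub_zero]
  simpa [Real.exp_eq_exp_ℝ] using NormedSpace.expSeries_div_hasSum_exp r

lemma jXi_of_janossy_const (ν : Measure Λ) [SigmaFinite ν] (lc : Λ → ℝ) (pd : ℝ)
    (ld : Λ → Λ → ℝ) (jf : (n : ℕ) → (Fin n → Λ) → ℝ) (c : ℝ) (hjf : ∀ n u, jf n u = c)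
    {m : ℕ} (z : Fin m → Λ) (T : Finset (Fin m)) :
    jXi ν lc pd ld jf z T = c * Real.exp ((1 - pd) * ν.real Set.univ) *
      ∏ j ∈ T, (lc (z j) + ∫ u, pd * ld (z j) u ∂ν) := by
  set r := (1 - pd) * ν.real Set.univ
  set I : Fin m → ℝ := fun j => ∫ u, pd * ld (z j) u ∂ν
  have hterm : ∀ (p : ℕ) (S : Finset (Fin m)),
      (if hS : S.card ≤ p then
        (∏ j ∈ T \ S, lc (z j)) * ((1 - pd) ^ (p - S.card) / (p - S.card).factorial) *
          ∫ u : Fin p → Λ, jf p u *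
            ∏ k : Fin S.card, pd * ld (z (S.orderEmbOfFin rfl k)) (u (Fin.castLE hS k))
            ∂Measure.pi (fun _ => ν)
      else 0) = c * (∏ j ∈ T \ S, lc (z j)) * (∏ j ∈ S, I j) *
        (if S.card ≤ p then r ^ (p - S.card) / (p - S.card).factorial else 0) := by
    intro p S
    split_ifs with hS
    · simp only [hjf, integral_const_mul]
      rw [integral_prod_orderEmbOfFin ν S hS fun j v => pd * ld (z j) v, mul_pow]
      ring
    · rw [mul_zero]
  have hsum : HasSum (fun p => ∑ S ∈ T.powerset,
      c * (∏ j ∈ T \ S, lc (z j)) * (∏ j ∈ S, I j) *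
        (if S.card ≤ p then r ^ (p - S.card) / (p - S.card).factorial else 0))
      (∑ S ∈ T.powerset, c * (∏ j ∈ T \ S, lc (z j)) * (∏ j ∈ S, I j) * Real.exp r) :=
    hasSum_sum fun S _ => (Real.hasSum_ite_pow_sub_div_factorial r S.card).mul_left _
  have hexpand : ∏ j ∈ T, (lc (z j) + I j) =
      ∑ S ∈ T.powerset, (∏ j ∈ S, I j) * ∏ j ∈ T \ S, lc (z j) := by
    simp_rw [add_comm (lc _), prod_add]
  rw [jXi]
  simp only [hterm]
  rw [hsum.tsum_eq, hexpand, mul_sum]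
  exact sum_congr rfl fun S _ => by ring

lemma ups1_eq_jXi_snoc (ν : Measure Λ) [SigmaFinite ν] (lc : Λ → ℝ) (pd : ℝ)
    (ld : Λ → Λ → ℝ) (jf : (n : ℕ) → (Fin n → Λ) → ℝ) {m : ℕ} (z : Fin m → Λ)
    (T : Finset (Fin m)) (x : Λ) :
    ups1 ν lc pd ld jf z T x = jXi ν lc pd ld (fun n u => jf (n + 1) (Fin.snoc u x)) z T :=
  rfl

theorem poisson_posterior_intensity_general (ν : Measure Λ) [IsFiniteMeasure ν]
    (pd : ℝ)
    (lc : Λ → ℝ) (ld : Λ → Λ → ℝ)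
    (jf : (n : ℕ) → (Fin n → Λ) → ℝ)
    (hjf : ∀ (n : ℕ) (u : Fin n → Λ), jf n u = Real.exp (-(ν Set.univ).toReal))
    {m : ℕ} (z : Fin m → Λ)
    (hpos : ∀ k, 0 < lc (z k) + ∫ u, pd * ld (z k) u ∂ν)
    (μ : Λ → ℝ)
    (hμ : ∀ x, μ x =
      ((1 - pd) * ups1 ν lc pd ld jf z Finset.univ x +
          ∑ k : Fin m, pd * ld (z k) x * ups1 ν lc pd ld jf z (Finset.univ \ {k}) x)
        / jXi ν lc pd ld jf z Finset.univ) :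
    ∀ x, μ x = (1 - pd) +
      ∑ k : Fin m, pd * ld (z k) x / (lc (z k) + ∫ u, pd * ld (z k) u ∂ν) := by
  intro x
  set c : Fin m → ℝ := fun k => lc (z k) + ∫ u, pd * ld (z k) u ∂ν
  change μ x = (1 - pd) + ∑ k, pd * ld (z k) x / c k
  set K := Real.exp (-(ν Set.univ).toReal) * Real.exp ((1 - pd) * ν.real Set.univ)
  have hK : K ≠ 0 := by positivity
  have hc : ∀ k, c k ≠ 0 := fun k => (hpos k).ne'
  have hP : ∏ j, c j ≠ 0 := prod_ne_zero_iff.2 fun k _ => hc k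
  have hJ : jXi ν lc pd ld jf z univ = K * ∏ j, c j :=
    jXi_of_janossy_const ν lc pd ld jf _ hjf z univ
  have hups : ∀ T, ups1 ν lc pd ld jf z T x = K * ∏ j ∈ T, c j := fun T => by
    rw [ups1_eq_jXi_snoc, jXi_of_janossy_const ν lc pd ld _ _ fun n u => hjf (n + 1) _]
  have hdrop : ∀ k, ∏ j ∈ univ \ {k}, c j = (∏ j, c j) / c k := fun k => by
    rw [sdiff_singleton_eq_erase, eq_div_iff (hc k), prod_erase_mul _ _ (mem_univ k)]
  rw [hμ x, hJ, add_div, sum_div]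
  simp only [hups, hdrop]
  congr 1
  · field_simp
  · exact sum_congr rfl fun k _ => by field_simp

/-- Poisson prior case: the first-order posterior intensity of `Φ` given the
measurements `Ξ = (z_1,…,z_m)`, defined via the corrector terms as
`μ¹_{Φ|Ξ}(x) = (q_d Υ¹_{z_{1:m}}(x) + Σ_k p_d l_d(z_k|x) Υ¹_{z_{1:m}∖z_k}(x)) / j^(m)_Ξ(z_{1:m})`,
equals `q_d + Σ_k p_d l_d(z_k|x)/(l_c(z_k) + ∫ p_d l_d(z_k|u) ν(du))`. -/
theorem poisson_posterior_intensity (ν : Measure Λ) [IsFiniteMeasure ν]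
    (pd : ℝ) (hpd0 : 0 ≤ pd) (hpd1 : pd ≤ 1)
    (lc : Λ → ℝ) (ld : Λ → Λ → ℝ)
    (hlc : ∀ u, 0 ≤ lc u) (hld : ∀ u v, 0 ≤ ld u v)
    (hint : ∀ u, Integrable (fun v => ld u v) ν)
    (jf : (n : ℕ) → (Fin n → Λ) → ℝ)
    (hjf : ∀ (n : ℕ) (u : Fin n → Λ), jf n u = Real.exp (-(ν Set.univ).toReal))
    {m : ℕ} (z : Fin m → Λ) (hz : Function.Injective z)
    (hpos : ∀ k, 0 < lc (z k) + ∫ u, pd * ld (z k) u ∂ν)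
    (μ : Λ → ℝ)
    (hμ : ∀ x, μ x =
      ((1 - pd) * ups1 ν lc pd ld jf z Finset.univ x +
          ∑ k : Fin m, pd * ld (z k) x * ups1 ν lc pd ld jf z (Finset.univ \ {k}) x)
        / jXi ν lc pd ld jf z Finset.univ) :
    ∀ x, μ x = (1 - pd) +
      ∑ k : Fin m, pd * ld (z k) x / (lc (z k) + ∫ u, pd * ld (z k) u ∂ν) :=
  poisson_posterior_intensity_general ν pd lc ld jf hjf z hpos μ hμ
end

section
/- For a Poisson prior, the posterior covariance on a set A satisfies c²_{Φ|Ξ=z_{1:m}}(A,A) = q_d ν(A) + Σ_{k=1}^m (I_A(z_k)/s_k)(1 − I_A(z_k)/s_k), where I_A(z) = ∫_A p_d l_d(z|x) ν(dx) and s_k = l_c(z_k) + ∫_Λ p_d l_d(z_k|u) ν(du). -/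
open MeasureTheory Finset

/-!
With `f_k = ℓ_k / s_k` and `g = Σ_k f_k`, the off-diagonal sum in `ρ²` is
`g(x) g(y) − Σ_k f_k(x) f_k(y)`, so `ρ²(x, y) = μ¹(x) μ¹(y) − Σ_k f_k(x) f_k(y)`.
Integrating over `A × A` gives `μ¹(A)² − Σ_k (∫_A f_k)²`; the square `μ¹(A)²` cancels in the
covariance, leaving `μ¹(A) − Σ_k (I_A(z_k)/s_k)²` with `μ¹(A) = q_d ν(A) + Σ_k I_A(z_k)/s_k`.
-/

theorem sum_sum_ite_ne_mul {ι R : Type*} [Fintype ι] [DecidableEq ι] [CommRing R]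
    (a b : ι → R) :
    ∑ i, ∑ j, (if i ≠ j then a i * b j else 0) = (∑ i, a i) * (∑ j, b j) - ∑ i, a i * b i := by
  rw [sum_mul_sum, ← sum_sub_distrib]
  refine sum_congr rfl fun i _ => ?_
  have diag : a i * b i = ∑ j, if i = j then a i * b j else 0 := by simp
  rw [diag, eq_sub_iff_add_eq, ← sum_add_distrib]
  refine sum_congr rfl fun j _ => ?_
  by_cases h : i = j <;> simp [h]

theorem integral_integral_mul_sub_sum {α ι : Type*} [MeasurableSpace α] [Fintype ι]
    (ν : Measure α) (u v : α → ℝ) (f g : ι → α → ℝ) (hu : Integrable u ν)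
    (hv : Integrable v ν) (hf : ∀ i, Integrable (f i) ν) (hg : ∀ i, Integrable (g i) ν) :
    ∫ x, ∫ y, (u x * v y - ∑ i, f i x * g i y) ∂ν ∂ν =
      (∫ x, u x ∂ν) * (∫ y, v y ∂ν) - ∑ i, (∫ x, f i x ∂ν) * (∫ y, g i y ∂ν) := by
  have inner : ∀ x, ∫ y, (u x * v y - ∑ i, f i x * g i y) ∂ν =
      u x * (∫ y, v y ∂ν) - ∑ i, f i x * (∫ y, g i y ∂ν) := fun x => by
    rw [integral_sub (hv.const_mul _) (integrable_finsetSum _ fun i _ => (hg i).const_mul _),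
      integral_const_mul, integral_finsetSum _ fun i _ => (hg i).const_mul _]
    simp only [integral_const_mul]
  simp only [inner]
  rw [integral_sub (hu.mul_const _) (integrable_finsetSum _ fun i _ => (hf i).mul_const _),
    integral_mul_const, integral_finsetSum _ fun i _ => (hf i).mul_const _]
  simp only [integral_mul_const]

theorem poisson_posterior_variance_general {Λ : Type*} [MeasurableSpace Λ]
    (ν : Measure Λ) [IsFiniteMeasure ν]
    (pd : ℝ) (ld : Λ → Λ → ℝ)
    (m : ℕ) (z : Fin m → Λ)
    (hint : ∀ k, Integrable (fun u => ld (z k) u) ν)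
    (s : Fin m → ℝ)
    (μ : Λ → ℝ) (ρ : Λ → Λ → ℝ)
    (hμ : ∀ x, μ x = (1 - pd) + ∑ k, pd * ld (z k) x / s k)
    (hρ : ∀ x y, ρ x y = (1 - pd) ^ 2 +
      (1 - pd) * (∑ k, (pd * ld (z k) x + pd * ld (z k) y) / s k) +
      ∑ k, ∑ k', if k ≠ k' then
        (pd * ld (z k) x) * (pd * ld (z k') y) / (s k * s k') else 0)
    (A : Set Λ)
    (c : ℝ)
    (hc : c = (∫ x in A, μ x ∂ν) +
        (∫ x in A, (∫ y in A, ρ x y ∂ν) ∂ν) - (∫ x in A, μ x ∂ν) ^ 2) :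
    c = (1 - pd) * (ν A).toReal +
      ∑ k, ((∫ x in A, pd * ld (z k) x ∂ν) / s k) *
        (1 - (∫ x in A, pd * ld (z k) x ∂ν) / s k) := by
  set f : Fin m → Λ → ℝ := fun k x => pd * ld (z k) x / s k
  have hf_int (k) : Integrable (f k) (ν.restrict A) :=
    (((hint k).const_mul pd).div_const (s k)).restrict
  have hμ_int : Integrable μ (ν.restrict A) := by
    rw [funext hμ]
    exact (integrable_const _).add (integrable_finsetSum _ fun k _ => hf_int k)
  have hρ_eq (x y) : ρ x y = μ x * μ y - ∑ k, f k x * f k y := by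
    simp only [hρ, hμ, ← div_mul_div_comm, sum_sum_ite_ne_mul, add_div, sum_add_distrib]
    ring
  have hμA : ∫ x in A, μ x ∂ν = (1 - pd) * (ν A).toReal + ∑ k, ∫ x in A, f k x ∂ν := by
    simp only [hμ]
    rw [integral_add (integrable_const _) (integrable_finsetSum _ fun k _ => hf_int k),
      integral_finsetSum _ fun k _ => hf_int k, setIntegral_const, smul_eq_mul, mul_comm,
      measureReal_def]
  have hfA (k) : ∫ x in A, f k x ∂ν = (∫ x in A, pd * ld (z k) x ∂ν) / s k := integral_div _ _
  rw [hc]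
  simp only [hρ_eq, integral_integral_mul_sub_sum _ _ _ _ _ hμ_int hμ_int hf_int hf_int, hμA,
    ← hfA, mul_sub, mul_one, sum_sub_distrib]
  ring

/-- Poisson prior case: with posterior intensity
`μ¹_{Φ|Ξ}(x) = q_d + Σ_k ℓ_k(x)/s_k` and posterior second factorial moment density
`ρ²_{Φ|Ξ}(x,y) = q_d² + q_d Σ_k (ℓ_k(x)+ℓ_k(y))/s_k + Σ_{r≠p} ℓ_r(x)ℓ_p(y)/(s_r s_p)`
(`ℓ_k(x) = p_d l_d(z_k|x)`, `s_k = l_c(z_k) + ∫ p_d l_d(z_k|u) ν(du)`), the posterior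
covariance `c = μ²(A,A) − (μ¹(A))²` with
`μ²(A,A) = ∫_A μ¹ dν + ∫_{A×A} ρ² dν dν` satisfies
`c = q_d ν(A) + Σ_k (I_A(z_k)/s_k)(1 − I_A(z_k)/s_k)` where
`I_A(z_k) = ∫_A p_d l_d(z_k|x) ν(dx)`. -/
theorem poisson_posterior_variance {Λ : Type*} [MeasurableSpace Λ]
    (ν : Measure Λ) [IsFiniteMeasure ν]
    (pd : ℝ) (lc : Λ → ℝ) (ld : Λ → Λ → ℝ)
    (m : ℕ) (z : Fin m → Λ)
    (hint : ∀ k, Integrable (fun u => ld (z k) u) ν)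
    (s : Fin m → ℝ)
    (hs : ∀ k, s k = lc (z k) + ∫ u, pd * ld (z k) u ∂ν)
    (μ : Λ → ℝ) (ρ : Λ → Λ → ℝ)
    (hμ : ∀ x, μ x = (1 - pd) + ∑ k, pd * ld (z k) x / s k)
    (hρ : ∀ x y, ρ x y = (1 - pd) ^ 2 +
      (1 - pd) * (∑ k, (pd * ld (z k) x + pd * ld (z k) y) / s k) +
      ∑ k, ∑ k', if k ≠ k' then
        (pd * ld (z k) x) * (pd * ld (z k') y) / (s k * s k') else 0)
    (A : Set Λ) (hA : MeasurableSet A)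
    (c : ℝ)
    (hc : c = (∫ x in A, μ x ∂ν) +
        (∫ x in A, (∫ y in A, ρ x y ∂ν) ∂ν) - (∫ x in A, μ x ∂ν) ^ 2) :
    c = (1 - pd) * (ν A).toReal +
      ∑ k, ((∫ x in A, pd * ld (z k) x ∂ν) / s k) *
        (1 - (∫ x in A, pd * ld (z k) x ∂ν) / s k) :=
  poisson_posterior_variance_general ν pd ld m z hint s μ ρ hμ hρ A c hc
end
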